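/- arXiv:1405.2480 — 2 statements merged into one kernel-verified Lean document; each statement's English description precedes it below -/
import Mathlib

section
/- Let X ⊂ Z^n be a finite set satisfying the support hyperplane property, and let z₁, z₂ ∈ conv(X) ∩ Z^n be two distinct integer points with z₁, z₂ ∉ X. Then there exist disjoint subsets X₁, X₂ ⊆ X with |X₁| + |X₂| ≥ |X| − 2 such that both X₁ ∪ {z₁, z₂} and X₂ ∪ {z₁, z₂} satisfy the support hyperplane property. -/
/-!
At most two points of `X` lie on the line `L` through `z₁` and `z₂`, since an exposed point is
never strictly between two other points of the set. As the dual space is not a finite union of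
proper subspaces, some linear functional `h` is constant on `L` and takes a different value at every
other point of `X`; let `X₁`, `X₂` be the points of `X` on the two sides of the hyperplane
`h = h z₁`. A point of `X₁` stays exposed in `X₁ ∪ {z₁, z₂}` by its old functional, because
`z₁, z₂ ∈ conv X`. The point `z₁` is exposed by `h + ε k` for small `ε > 0`, where `k` is any
functional with `k z₂ < k z₁`: `h` pushes `X₁` below `z₁`, and `k` breaks the tie with `z₂`.
-/

/-- Coordinatewise cast of an integer point to `ℝⁿ`. -/
def icast {n : ℕ} (v : Fin n → ℤ) : Fin n → ℝ := fun i => (v i : ℝ)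

/-- The support hyperplane property. -/
def SHP {n : ℕ} (X : Finset (Fin n → ℤ)) : Prop :=
  ∀ y ∈ X, ∃ (f : Fin n → ℝ) (g : ℝ),
    (∑ i, f i * (y i : ℝ)) = g ∧ ∀ x ∈ X, x ≠ y → (∑ i, f i * (x i : ℝ)) < g

open Module

theorem Submodule.exists_dual_le_ker_forall_ne_zero {K V : Type*} [Field K] [Infinite K]
    [AddCommGroup V] [Module K V] (W : Submodule K V) (T : Finset V) (hT : ∀ v ∈ T, v ∉ W) :
    ∃ h : Dual K V, W ≤ LinearMap.ker h ∧ ∀ v ∈ T, h v ≠ 0 := by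
  let A := W.dualAnnihilator
  let p : T → Submodule K A := fun v => LinearMap.ker ((Dual.eval K V v).comp A.subtype)
  by_contra! hcover
  have hunion : ⋃ v, (p v : Set A) = Set.univ := by
    refine Set.eq_univ_of_forall fun h => ?_
    obtain ⟨v, hv, hhv⟩ := hcover h.1 fun w hw => (W.mem_dualAnnihilator h.1).mp h.2 w hw
    exact Set.mem_iUnion.mpr ⟨⟨v, hv⟩, hhv⟩
  obtain ⟨v, hv⟩ := Subspace.exists_eq_top_of_iUnion_eq_univ (k := K) (E := A) (p := p) hunion
  obtain ⟨f, hfv, hfW⟩ := W.exists_dual_map_eq_bot_of_notMem (hT v v.2) inferInstance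
  have hfA : f ∈ A := (W.mem_dualAnnihilator f).mpr fun w hw =>
    LinearMap.le_ker_iff_map.mpr hfW hw
  have : (⟨f, hfA⟩ : A) ∈ p v := hv ▸ Submodule.mem_top
  exact hfv this

section

variable {E : Type*} [AddCommGroup E] [Module ℝ E]

/-- The support hyperplane property, for a set of points of a real vector space. -/
def AllExposed (s : Set E) : Prop :=
  ∀ y ∈ s, ∃ l : Dual ℝ E, ∀ x ∈ s, x ≠ y → l x < l y

theorem eq_or_eq_of_mem_segment_of_forall_lt {s : Set E} {l : Dual ℝ E} {y a c : E}
    (hl : ∀ x ∈ s, x ≠ y → l x < l y) (ha : a ∈ s) (hc : c ∈ s) (hy : y ∈ segment ℝ a c) :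
    y = a ∨ y = c := by
  by_contra! hne
  have := (convex_halfSpace_lt l.isLinear (l y)).segment_subset
    (hl a ha hne.1.symm) (hl c hc hne.2.symm) hy
  exact lt_irrefl (l y) this

theorem lt_of_mem_convexHull_of_forall_lt {s : Set E} {l : Dual ℝ E} {y z : E}
    (hl : ∀ x ∈ s, x ≠ y → l x < l y) (hz : z ∈ convexHull ℝ s) (hzy : z ≠ y) : l z < l y := by
  have hz' := convexHull_mono (Set.subset_insert_sdiff_singleton y s) hz
  rcases (s \ {y}).eq_empty_or_nonempty with he | hne
  · rw [he, insert_empty_eq, convexHull_singleton] at hz'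
    exact absurd hz' hzy
  rw [convexHull_insert hne, mem_convexJoin] at hz'
  obtain ⟨y', hy', w, hw, α, β, hα, hβ, hαβ, rfl⟩ := hz'
  rw [Set.mem_singleton_iff] at hy'
  subst y'
  have hlw : l w < l y :=
    convexHull_min (fun x hx => hl x hx.1 hx.2) (convex_halfSpace_lt l.isLinear (l y)) hw
  rcases hβ.eq_or_lt with rfl | hβ
  · simp_all
  · have hsum : α * l y + β * l y = l y := by rw [← add_mul, hαβ, one_mul]
    simp only [map_add, map_smul, smul_eq_mul]
    linarith [mul_lt_mul_of_pos_left hlw hβ]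

theorem AllExposed.not_collinear {s : Set E} (hs : AllExposed s) {a b c : E}
    (ha : a ∈ s) (hb : b ∈ s) (hc : c ∈ s) (hab : a ≠ b) (hac : a ≠ c) (hbc : b ≠ c) :
    ¬ Collinear ℝ {a, b, c} := by
  intro hcol
  rcases hcol.wbtw_or_wbtw_or_wbtw with h | h | h
  · obtain ⟨l, hl⟩ := hs b hb
    rcases eq_or_eq_of_mem_segment_of_forall_lt hl ha hc h.mem_segment with h | h <;> simp_all
  · obtain ⟨l, hl⟩ := hs c hc
    rcases eq_or_eq_of_mem_segment_of_forall_lt hl hb ha h.mem_segment with h | h <;> simp_all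
  · obtain ⟨l, hl⟩ := hs a ha
    rcases eq_or_eq_of_mem_segment_of_forall_lt hl hc hb h.mem_segment with h | h <;> simp_all

theorem AllExposed.card_le_two_of_subset_line {s : Set E} (hs : AllExposed s) {B : Finset E}
    (hBs : ↑B ⊆ s) {p q : E} (hB : ∀ x ∈ B, x ∈ line[ℝ, p, q]) : B.card ≤ 2 := by
  by_contra! h
  obtain ⟨a, ha, b, hb, c, hc, hab, hac, hbc⟩ := Finset.two_lt_card.mp h
  exact hs.not_collinear (hBs ha) (hBs hb) (hBs hc) hab hac hbc
    (collinear_triple_of_mem_affineSpan_pair (hB a ha) (hB b hb) (hB c hc))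

theorem exists_dual_lt {a b : E} (hab : a ≠ b) : ∃ k : Dual ℝ E, k a < k b := by
  obtain ⟨k, hk⟩ : ∃ k : Dual ℝ E, k (b - a) ≠ 0 := by
    by_contra! h
    exact hab (sub_eq_zero.mp ((forall_dual_apply_eq_zero_iff ℝ (b - a)).mp h)).symm
  rcases hk.lt_or_gt with hk | hk
  · exact ⟨-k, by simp only [map_sub] at hk; simp only [LinearMap.neg_apply]; linarith⟩
  · exact ⟨k, by simp only [map_sub] at hk; linarith⟩

open Filter Topology in
theorem exists_dual_forall_lt_of_lex {S : Finset E} {y : E} (h k : Dual ℝ E)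
    (hlex : ∀ x ∈ S, x ≠ y → h x < h y ∨ (h x = h y ∧ k x < k y)) :
    ∃ l : Dual ℝ E, ∀ x ∈ S, x ≠ y → l x < l y := by
  have hsmall : ∀ᶠ ε in 𝓝 (0 : ℝ), ∀ x ∈ S, h x < h y → ε * (k x - k y) < h y - h x := by
    refine (eventually_all_finset S).2 fun x _ => ?_
    by_cases hx : h x < h y
    · filter_upwards [(continuous_mul_const (k x - k y)).continuousAt.eventually_lt
        (continuousAt_const (y := h y - h x)) (by simpa using hx)] with ε hε _ using hε
    · exact Eventually.of_forall fun _ hx' => absurd hx' hx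
  obtain ⟨ε, hε, hεpos⟩ := ((hsmall.filter_mono nhdsWithin_le_nhds).and
    (self_mem_nhdsWithin (s := Set.Ioi 0))).exists
  refine ⟨h + ε • k, fun x hx hxy => ?_⟩
  simp only [LinearMap.add_apply, LinearMap.smul_apply, smul_eq_mul]
  rcases hlex x hx hxy with hlt | ⟨heq, hk⟩
  · linarith [hε x hx hlt]
  · linarith [mul_lt_mul_of_pos_left hk (hεpos : 0 < ε)]

theorem exists_dual_eq_and_ne_off_line (S : Finset E) (p q : E) :
    ∃ h : Dual ℝ E, h p = h q ∧ ∀ x ∈ S, x ∉ line[ℝ, p, q] → h x ≠ h p := by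
  classical
  have hpL : p ∈ line[ℝ, p, q] := left_mem_affineSpan_pair ℝ p q
  obtain ⟨h, hLh, hoff⟩ := line[ℝ, p, q].direction.exists_dual_le_ker_forall_ne_zero
    ((S.filter (· ∉ line[ℝ, p, q])).image (· -ᵥ p)) (by
      simp only [Finset.mem_image, Finset.mem_filter]
      rintro _ ⟨x, ⟨_, hxL⟩, rfl⟩
      rwa [AffineSubspace.vsub_right_mem_direction_iff_mem hpL])
  refine ⟨h, ?_, fun x hx hxL => ?_⟩
  · have := hLh (AffineSubspace.vsub_mem_direction (right_mem_affineSpan_pair ℝ p q) hpL)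
    rw [LinearMap.mem_ker, vsub_eq_sub, map_sub, sub_eq_zero] at this
    exact this.symm
  · have := hoff (x -ᵥ p) (Finset.mem_image_of_mem _ (Finset.mem_filter.2 ⟨hx, hxL⟩))
    rwa [vsub_eq_sub, map_sub, sub_ne_zero] at this

variable [DecidableEq E]

theorem AllExposed.union_pair_of_lt {S S' : Finset E} (hS : AllExposed (S : Set E)) (hS' : S' ⊆ S)
    {z₁ z₂ : E} (hz₁ : z₁ ∈ convexHull ℝ (S : Set E)) (hz₂ : z₂ ∈ convexHull ℝ (S : Set E))
    (hz₁S : z₁ ∉ S) (hz₂S : z₂ ∉ S) (hne : z₁ ≠ z₂) (h : Dual ℝ E) (hh : h z₁ = h z₂)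
    (hS'h : ∀ x ∈ S', h x < h z₁) : AllExposed ((S' ∪ {z₁, z₂} : Finset E) : Set E) := by
  have hmem : ∀ x, x ∈ ((S' ∪ {z₁, z₂} : Finset E) : Set E) ↔ x ∈ S' ∨ x = z₁ ∨ x = z₂ := by
    intro x; simp only [Finset.coe_union, Finset.coe_insert, Finset.coe_singleton, Set.mem_union,
      Set.mem_insert_iff, Set.mem_singleton_iff, Finset.mem_coe]
  intro y hy
  rcases (hmem y).1 hy with hyS' | rfl | rfl
  · obtain ⟨l, hl⟩ := hS y (hS' hyS')
    refine ⟨l, fun x hx hxy => ?_⟩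
    rcases (hmem x).1 hx with hx | rfl | rfl
    · exact hl x (hS' hx) hxy
    · exact lt_of_mem_convexHull_of_forall_lt hl hz₁ (by rintro rfl; exact hz₁S (hS' hyS'))
    · exact lt_of_mem_convexHull_of_forall_lt hl hz₂ (by rintro rfl; exact hz₂S (hS' hyS'))
  · obtain ⟨k, hk⟩ := exists_dual_lt hne.symm
    refine exists_dual_forall_lt_of_lex h k fun x hx hxy => ?_
    rcases (hmem x).1 hx with hx | rfl | rfl
    · exact Or.inl (hS'h x hx)
    · exact absurd rfl hxy
    · exact Or.inr ⟨hh.symm, hk⟩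
  · obtain ⟨k, hk⟩ := exists_dual_lt hne
    refine exists_dual_forall_lt_of_lex h k fun x hx hxy => ?_
    rcases (hmem x).1 hx with hx | rfl | rfl
    · exact Or.inl (hh ▸ hS'h x hx)
    · exact Or.inr ⟨hh, hk⟩
    · exact absurd rfl hxy

theorem AllExposed.exists_split_union_pair {S : Finset E} (hS : AllExposed (S : Set E))
    {z₁ z₂ : E} (hz₁ : z₁ ∈ convexHull ℝ (S : Set E)) (hz₂ : z₂ ∈ convexHull ℝ (S : Set E))
    (hz₁S : z₁ ∉ S) (hz₂S : z₂ ∉ S) (hne : z₁ ≠ z₂) :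
    ∃ S₁ S₂ : Finset E, S₁ ⊆ S ∧ S₂ ⊆ S ∧ Disjoint S₁ S₂ ∧ S.card - 2 ≤ S₁.card + S₂.card ∧
      AllExposed ((S₁ ∪ {z₁, z₂} : Finset E) : Set E) ∧
      AllExposed ((S₂ ∪ {z₁, z₂} : Finset E) : Set E) := by
  classical
  set L := line[ℝ, z₁, z₂]
  obtain ⟨h, hh, hoff⟩ := exists_dual_eq_and_ne_off_line S z₁ z₂
  have hcover : S ⊆ S.filter (· ∈ L) ∪ (S.filter (h · < h z₁) ∪ S.filter (h z₁ < h ·)) := by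
    intro x hx
    by_cases hxL : x ∈ L
    · simp [hx, hxL]
    · simp [hx, (hoff x hx hxL).lt_or_gt]
  have hdisj : Disjoint (S.filter (h · < h z₁)) (S.filter (h z₁ < h ·)) :=
    Finset.disjoint_filter.2 fun _ _ h₁ h₂ => lt_asymm h₁ h₂
  have hline := hS.card_le_two_of_subset_line (B := S.filter (· ∈ L))
    (Finset.coe_subset.2 (Finset.filter_subset _ S)) (fun x hx => (Finset.mem_filter.1 hx).2)
  refine ⟨_, _, Finset.filter_subset _ S, Finset.filter_subset _ S, hdisj, ?_,
    hS.union_pair_of_lt (Finset.filter_subset _ S) hz₁ hz₂ hz₁S hz₂S hne h hh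
      fun x hx => (Finset.mem_filter.1 hx).2,
    hS.union_pair_of_lt (Finset.filter_subset _ S) hz₁ hz₂ hz₁S hz₂S hne (-h) (by simp [hh])
      fun x hx => by simpa using (Finset.mem_filter.1 hx).2⟩
  have := (Finset.card_le_card hcover).trans (Finset.card_union_le _ _)
  rw [Finset.card_union_of_disjoint hdisj] at this
  omega

end

theorem icast_injective (n : ℕ) : Function.Injective (icast (n := n)) :=
  fun _ _ h => funext fun i => Int.cast_injective (congrFun h i)

def icastEmb (n : ℕ) : (Fin n → ℤ) ↪ (Fin n → ℝ) :=
  ⟨icast, icast_injective n⟩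

@[simp]
theorem coe_icastEmb (n : ℕ) : ⇑(icastEmb n) = icast := rfl

theorem SHP_iff_allExposed {n : ℕ} (X : Finset (Fin n → ℤ)) :
    SHP X ↔ AllExposed ((X.map (icastEmb n) : Finset (Fin n → ℝ)) : Set (Fin n → ℝ)) := by
  simp only [SHP, AllExposed, Finset.coe_map, coe_icastEmb, Set.forall_mem_image, Finset.mem_coe,
    (icast_injective n).ne_iff, exists_eq_left', (dotProductEquiv ℝ (Fin n)).surjective.exists,
    dotProductEquiv_apply_apply]
  rfl

theorem stmt_3 {n : ℕ} (X : Finset (Fin n → ℤ)) (hshp : SHP X)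
    (z₁ z₂ : Fin n → ℤ)
    (hz₁ : icast z₁ ∈ convexHull ℝ (icast '' (X : Set (Fin n → ℤ))))
    (hz₂ : icast z₂ ∈ convexHull ℝ (icast '' (X : Set (Fin n → ℤ))))
    (hz₁X : z₁ ∉ X) (hz₂X : z₂ ∉ X) (hne : z₁ ≠ z₂) :
    ∃ X₁ X₂ : Finset (Fin n → ℤ), X₁ ⊆ X ∧ X₂ ⊆ X ∧ Disjoint X₁ X₂ ∧
      X.card - 2 ≤ X₁.card + X₂.card ∧
      SHP (X₁ ∪ {z₁, z₂}) ∧ SHP (X₂ ∪ {z₁, z₂}) := by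
  rw [SHP_iff_allExposed] at hshp
  obtain ⟨S₁, S₂, hS₁, hS₂, hdisj, hcard, h₁, h₂⟩ := hshp.exists_split_union_pair
    (z₁ := icastEmb n z₁) (z₂ := icastEmb n z₂) (by simpa using hz₁) (by simpa using hz₂)
    ((Finset.mem_map' _).not.2 hz₁X) ((Finset.mem_map' _).not.2 hz₂X)
    ((icastEmb n).injective.ne hne)
  obtain ⟨X₁, hX₁, rfl⟩ := Finset.subset_map_iff.1 hS₁
  obtain ⟨X₂, hX₂, rfl⟩ := Finset.subset_map_iff.1 hS₂
  refine ⟨X₁, X₂, hX₁, hX₂, (Finset.disjoint_map _).1 hdisj, by simpa using hcard, ?_, ?_⟩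
  · rw [SHP_iff_allExposed]; simpa using h₁
  · rw [SHP_iff_allExposed]; simpa using h₂
end

section
/- Let P ⊂ R^n be the lower-bound polytope (defined by the 2(2^n − 1) inequalities ±(Σ_{i<j} x_i/2^i + x_j + Σ_{i>j} x_i/2^{i−1}) ≤ 1 for j = 1,…,n and ±(−x_{ℓ_N}/|N| + Σ_{i∈N,i≠ℓ_N} x_i/|N| − Σ_{i∉N} x_i/|N|^n) ≤ 1 for |N| ≥ 2). Then each defining inequality has exactly one integer point of P at which it holds with equality, and these 2(2^n − 1) tight integer points are pairwise distinct. -/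
/-!
Write `χ_N` for the integer point with entry `-1` at `min N`, `1` on the rest of `N` and `0`
elsewhere. The tight point of `±(j-th inequality)` is `±e_j`, that of `±(N-th inequality)` is
`±χ_N`, and evaluating all inequalities at these points shows that each is feasible and tight at
its own inequality only.

Conversely, every feasible integer point `y` is `0` or some `±χ_N`. Subtracting half of the
inequality at the first coordinate from the one at `j` leaves `y_j` plus a tail that is small once
the later entries lie in `[-1, 1]`; going down from the last coordinate this bounds every entry by
`1` (at the second coordinate the inequality for `N` = the first two coordinates is needed as
well). If the first nonzero entry is `-1`, no later entry can be `-1`, because all entries after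
the first one carry weights summing to less than the weight of the first.
-/

/-- Left-hand side `Σ_{i<j} x_i/2^{i} + x_j + Σ_{i>j} x_i/2^{i-1}` (1-based indices in the
paper, 0-based here). -/
noncomputable def lhsJ {n : ℕ} (j : Fin n) (x : Fin n → ℝ) : ℝ :=
  (∑ i ∈ Finset.univ.filter (fun i => i < j), x i / 2 ^ (i.val + 1)) + x j +
    ∑ i ∈ Finset.univ.filter (fun i => j < i), x i / 2 ^ i.val

/-- Left-hand side `−x_{ℓ_N}/|N| + Σ_{i∈N, i≠ℓ_N} x_i/|N| − Σ_{i∉N} x_i/|N|^n` where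
`ℓ_N = min N`. -/
noncomputable def lhsN {n : ℕ} (N : Finset (Fin n)) (h : N.Nonempty) (x : Fin n → ℝ) : ℝ :=
  -x (N.min' h) / (N.card : ℝ) + (∑ i ∈ N.erase (N.min' h), x i / (N.card : ℝ)) -
    ∑ i ∈ Nᶜ, x i / (N.card : ℝ) ^ n

/-- Membership in the lower-bound polytope `P`. -/
def inLB {n : ℕ} (x : Fin n → ℝ) : Prop :=
  (∀ j : Fin n, |lhsJ j x| ≤ 1) ∧
    ∀ N : Finset (Fin n), ∀ h : 2 ≤ N.card,
      |lhsN N (Finset.card_pos.mp (lt_of_lt_of_le (by norm_num) h)) x| ≤ 1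

/-- Index of a defining inequality of the lower-bound polytope: a sign together with
either `j ∈ {1,…,n}` or `N ⊆ {1,…,n}` with `|N| ≥ 2`. -/
abbrev LBIdx (n : ℕ) := (Fin n ⊕ {N : Finset (Fin n) // 2 ≤ N.card}) × Bool

/-- Left-hand side of the defining inequality of the lower-bound polytope with index `idx`
(each inequality reads `lbIneq idx x ≤ 1`). -/
noncomputable def lbIneq {n : ℕ} (idx : LBIdx n) (x : Fin n → ℝ) : ℝ :=
  match idx with
  | (Sum.inl j, b) => (if b then 1 else -1) * lhsJ j x
  | (Sum.inr N, b) =>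
      (if b then 1 else -1) *
        lhsN N.1 (Finset.card_pos.mp (lt_of_lt_of_le (by norm_num) N.2)) x

open Finset

lemma sum_inv_two_pow_comp_lt {ι : Type*} {S : Finset ι} {e : ι → ℕ} {a : ℕ}
    (he : Set.InjOn e S) (ha : ∀ i ∈ S, a ≤ e i) :
    ∑ i ∈ S, ((2 : ℝ) ^ e i)⁻¹ < 2 * ((2 : ℝ) ^ a)⁻¹ := by
  classical
  set b := a + (S.image e).sup id + 1
  have hsub : S.image e ⊆ Ico a b := fun m hm =>
    mem_Ico.mpr ⟨by obtain ⟨i, hi, rfl⟩ := mem_image.mp hm; exact ha i hi,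
      by have := le_sup (f := id) hm; simp only [id] at this; omega⟩
  have hgeom : ∑ m ∈ Ico a b, ((2 : ℝ) ^ m)⁻¹ = 2 * ((2 : ℝ) ^ a)⁻¹ - 2 * ((2 : ℝ) ^ b)⁻¹ := by
    simp_rw [← inv_pow]
    rw [geom_sum_Ico (by norm_num) (by omega)]
    ring
  calc ∑ i ∈ S, ((2 : ℝ) ^ e i)⁻¹ = ∑ m ∈ S.image e, ((2 : ℝ) ^ m)⁻¹ :=
        (sum_image (f := fun m => ((2 : ℝ) ^ m)⁻¹) he).symm
    _ ≤ ∑ m ∈ Ico a b, ((2 : ℝ) ^ m)⁻¹ :=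
        sum_le_sum_of_subset_of_nonneg hsub fun _ _ _ => by positivity
    _ < 2 * ((2 : ℝ) ^ a)⁻¹ := by
        rw [hgeom]; linarith [show (0 : ℝ) < ((2 : ℝ) ^ b)⁻¹ by positivity]

lemma two_mul_sub_one_lt_two_pow (n : ℕ) : 2 * ((n : ℝ) - 1) < 2 ^ n := by
  rcases Nat.eq_zero_or_pos n with rfl | hn
  · norm_num
  · have h := (n - 1).lt_two_pow_self
    have : 2 * (n - 1) < 2 ^ n := by
      calc 2 * (n - 1) < 2 * 2 ^ (n - 1) := by omega
        _ = 2 ^ n := by rw [← pow_succ']; congr 1; omega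
    have : (2 * (n - 1 : ℕ) : ℝ) < 2 ^ n := by exact_mod_cast this
    rwa [Nat.cast_sub hn, Nat.cast_one] at this

lemma inv_add_sub_one_mul_inv_pow_lt_one {k : ℕ} (hk : 2 ≤ k) (n : ℕ) :
    (k : ℝ)⁻¹ + ((n : ℝ) - 1) * ((k : ℝ) ^ n)⁻¹ < 1 := by
  have hk' : (2 : ℝ) ≤ k := by exact_mod_cast hk
  have hpow : (2 : ℝ) ^ n ≤ (k : ℝ) ^ n := pow_le_pow_left₀ (by norm_num) hk' n
  have hinv : (k : ℝ)⁻¹ ≤ 2⁻¹ := inv_anti₀ (by norm_num) hk'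
  have : ((n : ℝ) - 1) * ((k : ℝ) ^ n)⁻¹ < 2⁻¹ := by
    rw [← div_eq_mul_inv, div_lt_iff₀ (by positivity)]
    linarith [two_mul_sub_one_lt_two_pow n]
  linarith

section

variable {n : ℕ}

noncomputable def weightJ (j i : Fin n) : ℝ :=
  if i < j then ((2 : ℝ) ^ (i.val + 1))⁻¹ else if i = j then 1 else ((2 : ℝ) ^ i.val)⁻¹

lemma lhsJ_eq_sum (j : Fin n) (x : Fin n → ℝ) : lhsJ j x = ∑ i, x i * weightJ j i := by
  have hdiag : x j = ∑ i, if i = j then x i else 0 := by simp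
  rw [lhsJ, sum_filter, sum_filter, hdiag, ← sum_add_distrib, ← sum_add_distrib]
  refine sum_congr rfl fun i _ => ?_
  rcases lt_trichotomy i j with h | rfl | h
  · simp [weightJ, h, h.ne, h.not_gt, div_eq_mul_inv]
  · simp [weightJ]
  · simp [weightJ, h, h.ne', h.not_gt, div_eq_mul_inv]

lemma weightJ_self (j : Fin n) : weightJ j j = 1 := by simp [weightJ]

lemma weightJ_of_lt {j i : Fin n} (h : i < j) : weightJ j i = ((2 : ℝ) ^ (i.val + 1))⁻¹ := by
  simp [weightJ, h]

lemma weightJ_pos (j i : Fin n) : 0 < weightJ j i := by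
  unfold weightJ; split_ifs <;> positivity

lemma weightJ_le_one (j i : Fin n) : weightJ j i ≤ 1 := by
  unfold weightJ; split_ifs <;> simp [inv_le_one_iff₀, one_le_pow₀]

lemma weightJ_eq_one_iff {j i : Fin n} : weightJ j i = 1 ↔ i = j := by
  refine ⟨fun h => ?_, fun h => h ▸ weightJ_self j⟩
  by_contra hij
  rcases lt_or_gt_of_ne hij with hlt | hgt
  · rw [weightJ_of_lt hlt, inv_eq_one] at h
    exact absurd h (one_lt_pow₀ (by norm_num) (by omega)).ne'
  · simp only [weightJ, hgt.not_gt, hij, if_false, inv_eq_one] at h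
    exact absurd h (one_lt_pow₀ (by norm_num) (by rw [Fin.lt_def] at hgt; omega)).ne'

/-- Off the diagonal, `weightJ j i = 2⁻ᵉ` with `e = i + 1` below `j` and `e = i` above it, and
these exponents are distinct. -/
lemma sum_weightJ_lt {j : Fin n} {a : ℕ} (haj : a ≤ j) {S : Finset (Fin n)}
    (hS : ∀ i ∈ S, a ≤ i.val ∧ i ≠ j) : ∑ i ∈ S, weightJ j i < ((2 : ℝ) ^ a)⁻¹ := by
  let e : Fin n → ℕ := fun i => if i < j then i.val + 1 else i.val
  have hw : ∀ i ∈ S, weightJ j i = ((2 : ℝ) ^ e i)⁻¹ := fun i hi => by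
    simp only [weightJ, e, (hS i hi).2, if_false]; split_ifs <;> rfl
  have he : Set.InjOn e S := fun i hi i' hi' h => by
    have := (hS i hi).2; have := (hS i' hi').2
    simp only [e] at h; split_ifs at h <;> simp only [Fin.lt_def, ne_eq, Fin.ext_iff] at * <;> omega
  have hea : ∀ i ∈ S, a + 1 ≤ e i := fun i hi => by
    have := (hS i hi).1; have := (hS i hi).2
    simp only [e]; split_ifs <;> simp only [Fin.lt_def, ne_eq, Fin.ext_iff] at * <;> omega
  rw [sum_congr rfl hw]
  calc _ < 2 * ((2 : ℝ) ^ (a + 1))⁻¹ := sum_inv_two_pow_comp_lt he hea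
    _ = ((2 : ℝ) ^ a)⁻¹ := by rw [pow_succ]; field_simp

lemma abs_sum_mul_weightJ_lt {j : Fin n} {a : ℕ} (haj : a ≤ j) {S : Finset (Fin n)}
    (hS : ∀ i ∈ S, a ≤ i.val ∧ i ≠ j) {x : Fin n → ℝ} (hx : ∀ i ∈ S, |x i| ≤ 1) :
    |∑ i ∈ S, x i * weightJ j i| < ((2 : ℝ) ^ a)⁻¹ := by
  calc |∑ i ∈ S, x i * weightJ j i| ≤ ∑ i ∈ S, |x i * weightJ j i| := abs_sum_le_sum_abs _ _
    _ ≤ ∑ i ∈ S, weightJ j i := sum_le_sum fun i hi => by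
        rw [abs_mul, abs_of_pos (weightJ_pos j i)]
        exact mul_le_of_le_one_left (weightJ_pos j i).le (hx i hi)
    _ < _ := sum_weightJ_lt haj hS

/-- Up to sign, these are the nonzero integer points of the polytope. -/
def signedIndicator (N : Finset (Fin n)) (h : N.Nonempty) : Fin n → ℤ :=
  fun i => if i = N.min' h then -1 else if i ∈ N then 1 else 0

section SignedIndicator

variable {N : Finset (Fin n)} (h : N.Nonempty)

lemma signedIndicator_eq_zero {i : Fin n} (hi : i ∉ N) : signedIndicator N h i = 0 := by
  have : i ≠ N.min' h := fun e => hi (e ▸ N.min'_mem h)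
  simp [signedIndicator, this, hi]

lemma sum_signedIndicator_mul (u : Fin n → ℝ) :
    ∑ i, (signedIndicator N h i : ℝ) * u i = -u (N.min' h) + ∑ i ∈ N.erase (N.min' h), u i := by
  rw [← sum_subset (subset_univ N) fun i _ hi => by simp [signedIndicator_eq_zero h hi],
    ← add_sum_erase N _ (N.min'_mem h)]
  congr 1
  · simp [signedIndicator]
  · refine sum_congr rfl fun i hi => ?_
    simp [signedIndicator, (mem_erase.mp hi).1, (mem_erase.mp hi).2]

lemma signedIndicator_singleton (j : Fin n) :
    signedIndicator {j} (singleton_nonempty j) = -Pi.single j 1 := by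
  ext i
  by_cases hij : i = j <;> simp [signedIndicator, hij]

lemma lhsJ_signedIndicator_lt_one (j : Fin n) :
    lhsJ j (fun i => (signedIndicator N h i : ℝ)) < 1 := by
  set ℓ := N.min' h
  rw [lhsJ_eq_sum, sum_signedIndicator_mul]
  have hℓ := weightJ_pos j ℓ
  by_cases hj : j ∈ N.erase ℓ
  · have hℓj : ℓ < j := min'_lt_of_mem_erase_min' _ h hj
    rw [← add_sum_erase _ _ hj, weightJ_self, weightJ_of_lt hℓj]
    have := sum_weightJ_lt (S := (N.erase ℓ).erase j) (j := j) (a := ℓ.val + 1) hℓj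
      fun i hi => ⟨min'_lt_of_mem_erase_min' _ h (mem_of_mem_erase hi), ne_of_mem_erase hi⟩
    linarith
  · have := sum_weightJ_lt (S := N.erase ℓ) (j := j) (a := 0) (Nat.zero_le _)
      fun i hi => ⟨Nat.zero_le _, fun e => hj (e ▸ hi)⟩
    rw [pow_zero, inv_one] at this
    linarith

lemma neg_one_lt_lhsJ_signedIndicator (hN : 2 ≤ N.card) (j : Fin n) :
    -1 < lhsJ j (fun i => (signedIndicator N h i : ℝ)) := by
  rw [lhsJ_eq_sum, sum_signedIndicator_mul]
  have hpos : 0 < ∑ i ∈ N.erase (N.min' h), weightJ j i :=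
    sum_pos (fun i _ => weightJ_pos j i)
      (card_pos.mp (by rw [card_erase_of_mem (N.min'_mem h)]; omega))
  linarith [weightJ_le_one j (N.min' h)]

end SignedIndicator

noncomputable def weightN (M : Finset (Fin n)) (h : M.Nonempty) (i : Fin n) : ℝ :=
  if i = M.min' h then -(M.card : ℝ)⁻¹ else if i ∈ M then (M.card : ℝ)⁻¹
    else -((M.card : ℝ) ^ n)⁻¹

lemma lhsN_eq_sum (M : Finset (Fin n)) (h : M.Nonempty) (x : Fin n → ℝ) :
    lhsN M h x = ∑ i, x i * weightN M h i := by
  have hmin : -x (M.min' h) / (M.card : ℝ) =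
      ∑ i, if i = M.min' h then -x i / (M.card : ℝ) else 0 := by simp
  have hmem : ∀ (t : Finset (Fin n)) (f : Fin n → ℝ),
      ∑ i ∈ t, f i = ∑ i, if i ∈ t then f i else 0 := fun t f => by
    rw [sum_ite_mem, univ_inter]
  rw [lhsN, hmem (M.erase _), hmem Mᶜ, hmin, ← sum_add_distrib, ← sum_sub_distrib]
  refine sum_congr rfl fun i _ => ?_
  by_cases h1 : i = M.min' h
  · subst h1; simp [weightN, M.min'_mem h, div_eq_mul_inv]
  · by_cases h2 : i ∈ M <;> simp [weightN, h1, h2, div_eq_mul_inv]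

lemma inv_card_pow_lt_inv_card {M : Finset (Fin n)} (hM : 2 ≤ M.card) :
    ((M.card : ℝ) ^ n)⁻¹ < (M.card : ℝ)⁻¹ := by
  have hn : M.card ≤ n := by simpa using card_le_univ M
  have hk : (2 : ℝ) ≤ M.card := by exact_mod_cast hM
  apply inv_strictAnti₀ (by positivity)
  calc (M.card : ℝ) = (M.card : ℝ) ^ 1 := (pow_one _).symm
    _ < (M.card : ℝ) ^ n := pow_lt_pow_right₀ (by linarith) (by omega)

section WeightN

variable {M : Finset (Fin n)} (h : M.Nonempty)

lemma weightN_min' : weightN M h (M.min' h) = -(M.card : ℝ)⁻¹ := by simp [weightN]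

lemma weightN_of_mem_erase {i : Fin n} (hi : i ∈ M.erase (M.min' h)) :
    weightN M h i = (M.card : ℝ)⁻¹ := by
  simp [weightN, ne_of_mem_erase hi, mem_of_mem_erase hi]

lemma weightN_of_notMem {i : Fin n} (hi : i ∉ M) : weightN M h i = -((M.card : ℝ) ^ n)⁻¹ := by
  have : i ≠ M.min' h := fun e => hi (e ▸ M.min'_mem h)
  simp [weightN, this, hi]

lemma neg_inv_card_lt_weightN (hM : 2 ≤ M.card) {i : Fin n} (hi : i ≠ M.min' h) :
    -(M.card : ℝ)⁻¹ < weightN M h i := by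
  have := inv_card_pow_lt_inv_card hM
  have : (0 : ℝ) < ((M.card : ℝ) ^ n)⁻¹ := by have := card_pos.mpr h; positivity
  by_cases hiM : i ∈ M
  · rw [weightN_of_mem_erase h (mem_erase.mpr ⟨hi, hiM⟩)]; linarith
  · rw [weightN_of_notMem h hiM]; linarith

lemma weightN_neg_of_notMem_erase {i : Fin n} (hi : i ∉ M.erase (M.min' h)) :
    weightN M h i < 0 := by
  by_cases him : i = M.min' h
  · have : (0 : ℝ) < M.card := by exact_mod_cast card_pos.mpr h
    rw [him, weightN_min', neg_lt_zero]; positivity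
  · have hiM : i ∉ M := fun hiM => hi (mem_erase.mpr ⟨him, hiM⟩)
    have : (0 : ℝ) < M.card := by exact_mod_cast card_pos.mpr h
    rw [weightN_of_notMem h hiM, neg_lt_zero]; positivity


lemma weightN_le_inv_card (i : Fin n) : weightN M h i ≤ (M.card : ℝ)⁻¹ := by
  have : (0 : ℝ) < M.card := by exact_mod_cast card_pos.mpr h
  have : 0 < (M.card : ℝ)⁻¹ := by positivity
  have : 0 < ((M.card : ℝ) ^ n)⁻¹ := by positivity
  unfold weightN; split_ifs <;> linarith

lemma neg_inv_card_pow_le_weightN {i : Fin n} (hi : i ≠ M.min' h) :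
    -((M.card : ℝ) ^ n)⁻¹ ≤ weightN M h i := by
  have : (0 : ℝ) < M.card := by exact_mod_cast card_pos.mpr h
  have : 0 < (M.card : ℝ)⁻¹ := by positivity
  have : 0 < ((M.card : ℝ) ^ n)⁻¹ := by positivity
  unfold weightN; split_ifs <;> first | exact absurd ‹_› hi | linarith

lemma card_erase_min'_cast : ((M.erase (M.min' h)).card : ℝ) = M.card - 1 := by
  rw [card_erase_of_mem (M.min'_mem h), Nat.cast_sub (card_pos.mpr h), Nat.cast_one]

lemma sum_weightN_eq (A : Finset (Fin n)) :
    ∑ i ∈ A, weightN M h i = (A.filter (· ∈ M.erase (M.min' h))).card * (M.card : ℝ)⁻¹ +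
      ∑ i ∈ A.filter (· ∉ M.erase (M.min' h)), weightN M h i := by
  rw [← sum_filter_add_sum_filter_not A (· ∈ M.erase (M.min' h)),
    sum_congr rfl fun i hi => weightN_of_mem_erase h (mem_filter.mp hi).2, sum_const,
    nsmul_eq_mul]

lemma sum_weightN_le (A : Finset (Fin n)) :
    ∑ i ∈ A, weightN M h i ≤ ((M.card : ℝ) - 1) * (M.card : ℝ)⁻¹ := by
  have hc : (0 : ℝ) < (M.card : ℝ)⁻¹ := by have := card_pos.mpr h; positivity
  have hcard : ((A.filter (· ∈ M.erase (M.min' h))).card : ℝ) ≤ M.card - 1 := by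
    rw [← card_erase_min'_cast h]
    exact_mod_cast card_le_card fun i hi => (mem_filter.mp hi).2
  have hout : ∑ i ∈ A.filter (· ∉ M.erase (M.min' h)), weightN M h i ≤ 0 :=
    sum_nonpos fun i hi => (weightN_neg_of_notMem_erase h (mem_filter.mp hi).2).le
  rw [sum_weightN_eq]
  nlinarith

lemma eq_erase_min'_of_sum_weightN_eq {A : Finset (Fin n)}
    (heq : ∑ i ∈ A, weightN M h i = ((M.card : ℝ) - 1) * (M.card : ℝ)⁻¹) :
    A = M.erase (M.min' h) := by
  have hc : (0 : ℝ) < (M.card : ℝ)⁻¹ := by have := card_pos.mpr h; positivity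
  have hAB : A ⊆ M.erase (M.min' h) := fun i hi => by
    by_contra hiB
    have hneg := sum_neg (s := A.filter (· ∉ M.erase (M.min' h)))
      (fun k hk => weightN_neg_of_notMem_erase h (mem_filter.mp hk).2)
      ⟨i, mem_filter.mpr ⟨hi, hiB⟩⟩
    have hcard : ((A.filter (· ∈ M.erase (M.min' h))).card : ℝ) ≤ M.card - 1 := by
      rw [← card_erase_min'_cast h]
      exact_mod_cast card_le_card fun i hi => (mem_filter.mp hi).2
    rw [sum_weightN_eq] at heq
    nlinarith
  rw [sum_congr rfl fun i hi => weightN_of_mem_erase h (hAB hi), sum_const, nsmul_eq_mul,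
    ← card_erase_min'_cast h] at heq
  exact eq_of_subset_of_card_le hAB (by exact_mod_cast (mul_right_cancel₀ hc.ne' heq).ge)

end WeightN

section LhsNSignedIndicator

variable {M : Finset (Fin n)} (hM : M.Nonempty) (hM2 : 2 ≤ M.card)

include hM2 in
lemma abs_weightN_lt_one (i : Fin n) : |weightN M hM i| < 1 := by
  have hc : (M.card : ℝ)⁻¹ < 1 := inv_lt_one_of_one_lt₀ (by exact_mod_cast hM2)
  have hlow : -(M.card : ℝ)⁻¹ ≤ weightN M hM i := by
    by_cases hi : i = M.min' hM
    · rw [hi, weightN_min']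
    · exact (neg_inv_card_lt_weightN hM hM2 hi).le
  rw [abs_lt]; constructor <;> linarith [weightN_le_inv_card hM i]

include hM in
lemma inv_card_add_sub_one_mul_inv_card :
    (M.card : ℝ)⁻¹ + ((M.card : ℝ) - 1) * (M.card : ℝ)⁻¹ = 1 := by
  have : (M.card : ℝ) ≠ 0 := by exact_mod_cast (card_pos.mpr hM).ne'
  field_simp; ring

lemma lhsN_signedIndicator_self : lhsN M hM (fun i => (signedIndicator M hM i : ℝ)) = 1 := by
  rw [lhsN_eq_sum, sum_signedIndicator_mul, weightN_min', neg_neg,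
    sum_congr rfl fun i hi => weightN_of_mem_erase hM hi, sum_const, nsmul_eq_mul,
    card_erase_min'_cast hM, inv_card_add_sub_one_mul_inv_card hM]

variable {N : Finset (Fin n)} (hN : N.Nonempty)

include hM2 in
lemma lhsN_signedIndicator_le_one : lhsN M hM (fun i => (signedIndicator N hN i : ℝ)) ≤ 1 := by
  rw [lhsN_eq_sum, sum_signedIndicator_mul]
  have hℓ : -weightN M hM (N.min' hN) ≤ (M.card : ℝ)⁻¹ := by
    by_cases hℓm : N.min' hN = M.min' hM
    · rw [hℓm, weightN_min', neg_neg]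
    · linarith [neg_inv_card_lt_weightN hM hM2 hℓm]
  linarith [sum_weightN_le hM (N.erase (N.min' hN)), inv_card_add_sub_one_mul_inv_card hM]

include hM2 in
lemma eq_of_lhsN_signedIndicator_eq_one
    (heq : lhsN M hM (fun i => (signedIndicator N hN i : ℝ)) = 1) : N = M := by
  rw [lhsN_eq_sum, sum_signedIndicator_mul] at heq
  have hA := sum_weightN_le hM (N.erase (N.min' hN))
  have hone := inv_card_add_sub_one_mul_inv_card hM
  have hℓm : N.min' hN = M.min' hM := by
    by_contra hℓm
    linarith [neg_inv_card_lt_weightN hM hM2 hℓm]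
  rw [show weightN M hM (N.min' hN) = -(M.card : ℝ)⁻¹ by rw [hℓm, weightN_min'], neg_neg] at heq
  have hNM : N.erase (N.min' hN) = M.erase (M.min' hM) :=
    eq_erase_min'_of_sum_weightN_eq hM (by linarith)
  rw [← insert_erase (N.min'_mem hN), ← insert_erase (M.min'_mem hM), hNM, hℓm]

include hM2 in
lemma neg_one_lt_lhsN_signedIndicator :
    -1 < lhsN M hM (fun i => (signedIndicator N hN i : ℝ)) := by
  rw [lhsN_eq_sum, sum_signedIndicator_mul]
  set ℓ := N.min' hN
  set m := M.min' hM
  set c := (M.card : ℝ)⁻¹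
  set ε := ((M.card : ℝ) ^ n)⁻¹
  have hε : 0 < ε := by have := card_pos.mpr hM; positivity
  have hNn : N.card ≤ n := by simpa using card_le_univ N
  have hsmall := inv_add_sub_one_mul_inv_pow_lt_one hM2 n
  have hrest : ∀ A : Finset (Fin n), m ∉ A → -(A.card : ℝ) * ε ≤ ∑ i ∈ A, weightN M hM i :=
    fun A hA => by
      have := card_nsmul_le_sum A (weightN M hM) (-ε) fun i hi =>
        neg_inv_card_pow_le_weightN hM fun e => hA (by rw [e] at hi; exact hi)
      rw [nsmul_eq_mul] at this; linarith
  have hA : ((N.erase ℓ).card : ℝ) ≤ n - 1 := by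
    rw [card_erase_of_mem (N.min'_mem hN), Nat.cast_sub (card_pos.mpr hN)]
    push_cast; linarith [(by exact_mod_cast hNn : (N.card : ℝ) ≤ n)]
  by_cases hm : m ∈ N.erase ℓ
  · have hℓM : ℓ ∉ M := fun hℓ => (M.min'_le ℓ hℓ).not_gt (min'_lt_of_mem_erase_min' _ hN hm)
    have hcard : (((N.erase ℓ).erase m).card : ℝ) ≤ n - 1 := by
      have := card_le_card (erase_subset m (N.erase ℓ))
      have : (((N.erase ℓ).erase m).card : ℝ) ≤ (N.erase ℓ).card := by exact_mod_cast this
      linarith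
    rw [weightN_of_notMem hM hℓM, ← add_sum_erase _ _ hm, weightN_min']
    have := hrest _ (notMem_erase m (N.erase ℓ))
    nlinarith
  · have := hrest _ hm
    have := weightN_le_inv_card hM ℓ
    nlinarith

end LhsNSignedIndicator

lemma lhsJ_mul (j : Fin n) (c : ℝ) (x : Fin n → ℝ) :
    lhsJ j (fun i => c * x i) = c * lhsJ j x := by
  simp only [lhsJ_eq_sum, mul_sum, mul_assoc]

lemma lhsN_mul (M : Finset (Fin n)) (h : M.Nonempty) (c : ℝ) (x : Fin n → ℝ) :
    lhsN M h (fun i => c * x i) = c * lhsN M h x := by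
  simp only [lhsN_eq_sum, mul_sum, mul_assoc]

lemma lbIneq_mul (idx : LBIdx n) (c : ℝ) (x : Fin n → ℝ) :
    lbIneq idx (fun i => c * x i) = c * lbIneq idx x := by
  obtain ⟨_ | _, _⟩ := idx <;> simp only [lbIneq, lhsJ_mul, lhsN_mul] <;> ring

lemma lbIneq_sign (β : Fin n ⊕ {N : Finset (Fin n) // 2 ≤ N.card}) (b : Bool)
    (x : Fin n → ℝ) : lbIneq (β, b) x = (if b then 1 else -1) * lbIneq (β, true) x := by
  cases β <;> simp [lbIneq]

lemma lbIneq_zero (idx : LBIdx n) : lbIneq idx (fun _ => 0) = 0 := by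
  simpa using lbIneq_mul idx 0 fun _ => 0

lemma inLB_iff_forall_lbIneq_le_one (x : Fin n → ℝ) :
    inLB x ↔ ∀ idx : LBIdx n, lbIneq idx x ≤ 1 := by
  refine ⟨fun ⟨hJ, hN⟩ => ?_, fun h => ⟨fun j => ?_, fun N hN => ?_⟩⟩
  · rintro ⟨j | ⟨N, hN2⟩, b⟩
    · have := abs_le.mp (hJ j)
      cases b <;> simp only [lbIneq, Bool.false_eq_true, ↓reduceIte, neg_mul, one_mul] <;> linarith
    · have := abs_le.mp (hN N hN2)
      cases b <;> simp only [lbIneq, Bool.false_eq_true, ↓reduceIte, neg_mul, one_mul] <;> linarith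
  · have h1 := h (Sum.inl j, true); have h2 := h (Sum.inl j, false)
    simp only [lbIneq, ↓reduceIte, one_mul, Bool.false_eq_true, neg_mul] at h1 h2
    exact abs_le.mpr ⟨by linarith, h1⟩
  · have h1 := h (Sum.inr ⟨N, hN⟩, true); have h2 := h (Sum.inr ⟨N, hN⟩, false)
    simp only [lbIneq, ↓reduceIte, one_mul, Bool.false_eq_true, neg_mul] at h1 h2
    exact abs_le.mpr ⟨by linarith, h1⟩

lemma inLB_neg {x : Fin n → ℝ} (hx : inLB x) : inLB fun i => -x i := by
  have hneg : (fun i => -x i) = fun i => -1 * x i := by simp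
  refine ⟨fun j => ?_, fun N hN => ?_⟩ <;>
    simp only [hneg, lhsJ_mul, lhsN_mul, abs_mul, abs_neg, abs_one, one_mul]
  exacts [hx.1 j, hx.2 N hN]

/-- `basePoint β` is the tight point of the inequality `lbIneq (β, true) x ≤ 1`. -/
def basePoint : Fin n ⊕ {N : Finset (Fin n) // 2 ≤ N.card} → Fin n → ℤ
  | Sum.inl j => Pi.single j 1
  | Sum.inr N => signedIndicator N.1 (card_pos.mp (lt_of_lt_of_le two_pos N.2))

def tightPoint (idx : LBIdx n) : Fin n → ℤ :=
  fun i => (if idx.2 then 1 else -1) * basePoint idx.1 i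

lemma lhsJ_single (j' j : Fin n) :
    lhsJ j' (fun i => ((Pi.single j 1 : Fin n → ℤ) i : ℝ)) = weightJ j' j := by
  rw [lhsJ_eq_sum, sum_eq_single j (fun i _ hij => by simp [hij]) (by simp)]
  simp

lemma lhsN_single (M : Finset (Fin n)) (h : M.Nonempty) (j : Fin n) :
    lhsN M h (fun i => ((Pi.single j 1 : Fin n → ℤ) i : ℝ)) = weightN M h j := by
  rw [lhsN_eq_sum, sum_eq_single j (fun i _ hij => by simp [hij]) (by simp)]
  simp

lemma lbIneq_basePoint (β β' : Fin n ⊕ {N : Finset (Fin n) // 2 ≤ N.card}) :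
    -1 < lbIneq (β', true) (fun i => (basePoint β i : ℝ)) ∧
      lbIneq (β', true) (fun i => (basePoint β i : ℝ)) ≤ 1 ∧
      (lbIneq (β', true) (fun i => (basePoint β i : ℝ)) = 1 ↔ β' = β) := by
  rcases β with j | ⟨N, hN⟩ <;> rcases β' with j' | ⟨M, hM⟩ <;>
    simp only [lbIneq, basePoint, if_true, one_mul, lhsJ_single, lhsN_single]
  · refine ⟨by linarith [weightJ_pos j' j], weightJ_le_one j' j, ?_⟩
    rw [weightJ_eq_one_iff, Sum.inl.injEq, eq_comm]
  · have := abs_lt.mp (abs_weightN_lt_one (card_pos.mp (lt_of_lt_of_le two_pos hM)) hM j)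
    exact ⟨this.1, this.2.le, by simp [this.2.ne]⟩
  · have hlt := lhsJ_signedIndicator_lt_one (card_pos.mp (lt_of_lt_of_le two_pos hN)) j'
    exact ⟨neg_one_lt_lhsJ_signedIndicator _ hN j', hlt.le, by simp [hlt.ne]⟩
  · refine ⟨neg_one_lt_lhsN_signedIndicator _ hM _, lhsN_signedIndicator_le_one _ hM _,
      fun h1 => ?_, fun h1 => ?_⟩
    · simp [eq_of_lhsN_signedIndicator_eq_one _ hM _ h1]
    · obtain rfl : M = N := by simpa using h1
      exact lhsN_signedIndicator_self _

lemma lbIneq_tightPoint (idx idx' : LBIdx n) :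
    lbIneq idx' (fun i => (tightPoint idx i : ℝ)) ≤ 1 ∧
      (lbIneq idx' (fun i => (tightPoint idx i : ℝ)) = 1 ↔ idx' = idx) := by
  obtain ⟨β, b⟩ := idx
  obtain ⟨β', b'⟩ := idx'
  obtain ⟨hlow, hle, heq⟩ := lbIneq_basePoint β β'
  have hcast : (fun i => (tightPoint (β, b) i : ℝ)) =
      fun i => (if b then 1 else -1) * (basePoint β i : ℝ) := by
    ext i; simp only [tightPoint]; split_ifs <;> simp
  rw [hcast, lbIneq_sign, lbIneq_mul, Prod.mk.injEq, ← heq]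
  cases b <;> cases b' <;>
    simp only [Bool.false_eq_true, Bool.true_eq_false, ↓reduceIte, neg_mul, one_mul, mul_neg,
      neg_neg, and_true, and_false, iff_false]
  all_goals first | exact hle | exact ⟨by linarith, by intro h; linarith⟩

lemma weightJ_zero {z : Fin n} (hz : z.val = 0) (i : Fin n) :
    weightJ z i = 2 * ((2 : ℝ) ^ (i.val + 1))⁻¹ := by
  have : ¬ i < z := by rw [Fin.lt_def]; omega
  by_cases hi : i = z
  · subst hi; simp [weightJ, hz]
  · simp only [weightJ, this, hi, if_false, pow_succ, mul_inv]; ring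

/-- Half the inequality at `0` removes every entry before `j` from the inequality at `j`. -/
lemma lhsJ_sub_half_lhsJ_zero {z : Fin n} (hz : z.val = 0) (j : Fin n) (x : Fin n → ℝ) :
    lhsJ j x - lhsJ z x / 2 =
      x j * (1 - ((2 : ℝ) ^ (j.val + 1))⁻¹) + ∑ i ∈ Ioi j, x i * ((2 : ℝ) ^ (i.val + 1))⁻¹ := by
  have hdiag : x j * (1 - ((2 : ℝ) ^ (j.val + 1))⁻¹) =
      ∑ i, if i = j then x i * (1 - ((2 : ℝ) ^ (i.val + 1))⁻¹) else 0 := by simp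
  rw [lhsJ_eq_sum, lhsJ_eq_sum, sum_div, ← sum_sub_distrib, hdiag, ← filter_lt_eq_Ioi,
    sum_filter, ← sum_add_distrib]
  refine sum_congr rfl fun i _ => ?_
  rw [weightJ_zero hz]
  rcases lt_trichotomy i j with h | rfl | h
  · simp only [weightJ_of_lt h, h.ne, ↓reduceIte, h.not_gt, add_zero]; ring
  · simp only [weightJ_self, mul_one, ↓reduceIte, lt_self_iff_false, add_zero]; ring
  · simp only [weightJ, h.not_gt, h.ne', h, if_false, if_true, pow_succ, mul_inv]; ring

lemma abs_sum_Ioi_lt {j : Fin n} {x : Fin n → ℝ} (hx : ∀ i, j < i → |x i| ≤ 1) :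
    |∑ i ∈ Ioi j, x i * ((2 : ℝ) ^ (i.val + 1))⁻¹| < ((2 : ℝ) ^ (j.val + 1))⁻¹ := by
  calc |∑ i ∈ Ioi j, x i * ((2 : ℝ) ^ (i.val + 1))⁻¹|
      ≤ ∑ i ∈ Ioi j, ((2 : ℝ) ^ (i.val + 1))⁻¹ := by
        refine (abs_sum_le_sum_abs _ _).trans (sum_le_sum fun i hi => ?_)
        have hpos : (0 : ℝ) < ((2 : ℝ) ^ (i.val + 1))⁻¹ := by positivity
        rw [abs_mul, abs_of_pos hpos]
        exact mul_le_of_le_one_left hpos.le (hx i (mem_Ioi.mp hi))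
    _ < 2 * ((2 : ℝ) ^ (j.val + 2))⁻¹ :=
        sum_inv_two_pow_comp_lt (fun i _ i' _ h => Fin.ext (by simpa using h))
          fun i hi => by have := mem_Ioi.mp hi; rw [Fin.lt_def] at this; omega
    _ = ((2 : ℝ) ^ (j.val + 1))⁻¹ := by rw [pow_succ]; field_simp

/-- Index `1` is excluded: there the inequalities at `0` and `1` alone only give `|x 1| < 7/3`. -/
lemma abs_lt_two_of_tail {x : Fin n → ℝ} (hx : inLB x) {j : Fin n} (hj : j.val ≠ 1)
    (htail : ∀ i, j < i → |x i| ≤ 1) : |x j| < 2 := by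
  obtain ⟨z, hz⟩ : ∃ z : Fin n, z.val = 0 := ⟨⟨0, by omega⟩, rfl⟩
  have hid := lhsJ_sub_half_lhsJ_zero hz j x
  have hB := abs_sum_Ioi_lt htail
  set B := ∑ i ∈ Ioi j, x i * ((2 : ℝ) ^ (i.val + 1))⁻¹
  set r := ((2 : ℝ) ^ (j.val + 1))⁻¹
  have hr : r ≤ 2⁻¹ := inv_anti₀ (by norm_num) (le_self_pow₀ (by norm_num) (by omega))
  have hd : |lhsJ j x - lhsJ z x / 2| + r ≤ 2 * (1 - r) := by
    rcases Nat.lt_or_ge j.val 1 with h0 | h2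
    · obtain rfl : z = j := Fin.ext (by omega)
      have hr2 : r = 2⁻¹ := by simp [r, hz]
      rw [show lhsJ z x - lhsJ z x / 2 = lhsJ z x / 2 by ring, abs_div, abs_two, hr2]
      linarith [hx.1 z]
    · have : r ≤ 8⁻¹ := inv_anti₀ (by norm_num)
        (by calc (8 : ℝ) = 2 ^ 3 := by norm_num
              _ ≤ 2 ^ (j.val + 1) := pow_le_pow_right₀ (by norm_num) (by omega))
      have := abs_sub (lhsJ j x) (lhsJ z x / 2)
      rw [abs_div, abs_two] at this
      linarith [hx.1 j, hx.1 z]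
  have hr0 : 0 < 1 - r := by linarith
  have : |x j| * (1 - r) < 2 * (1 - r) := by
    have hxj : x j * (1 - r) = (lhsJ j x - lhsJ z x / 2) - B := by rw [hid]; ring
    calc |x j| * (1 - r) = |x j * (1 - r)| := by rw [abs_mul, abs_of_pos hr0]
      _ ≤ |lhsJ j x - lhsJ z x / 2| + |B| := hxj ▸ abs_sub _ _
      _ < 2 * (1 - r) := by linarith
  exact lt_of_mul_lt_mul_right this hr0.le

lemma abs_lhsN_pair_sub_lt {z o : Fin n} (hz : z.val = 0) (ho : o.val = 1)
    (h : ({z, o} : Finset (Fin n)).Nonempty) {x : Fin n → ℝ} (hx : ∀ i, o < i → |x i| ≤ 1) :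
    |lhsN {z, o} h x - (x o - x z) / 2| < 1 := by
  have hzo : z ≠ o := fun e => by rw [e] at hz; omega
  have hmin : ({z, o} : Finset (Fin n)).min' h = z :=
    le_antisymm (min'_le _ _ (by simp)) (le_min' _ _ _ fun i hi => by
      rcases mem_insert.mp hi with rfl | hi
      · exact le_rfl
      · rw [mem_singleton.mp hi, Fin.le_def]; omega)
  have hcompl : ∀ i ∈ ({z, o} : Finset (Fin n))ᶜ, o < i := fun i hi => by
    simp only [mem_compl, mem_insert, mem_singleton, not_or, Fin.ext_iff] at hi
    rw [Fin.lt_def]; omega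
  have hsum : |∑ i ∈ ({z, o} : Finset (Fin n))ᶜ, x i / ((2 : ℝ) ^ n)| < 1 := by
    calc _ ≤ ∑ i ∈ ({z, o} : Finset (Fin n))ᶜ, ((2 : ℝ) ^ n)⁻¹ := by
          refine (abs_sum_le_sum_abs _ _).trans (sum_le_sum fun i hi => ?_)
          rw [abs_div, abs_of_pos (by positivity : (0 : ℝ) < 2 ^ n), div_eq_mul_inv]
          exact mul_le_of_le_one_left (by positivity) (hx i (hcompl i hi))
      _ ≤ n * ((2 : ℝ) ^ n)⁻¹ := by
          rw [sum_const, nsmul_eq_mul]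
          gcongr
          exact_mod_cast (card_le_univ _).trans_eq (Fintype.card_fin n)
      _ < 1 := by
          rw [← div_eq_mul_inv, div_lt_one (by positivity)]
          exact_mod_cast n.lt_two_pow_self
  rw [lhsN, hmin, erase_insert (by simpa using hzo), sum_singleton, card_pair hzo] at *
  rw [show -x z / ((2 : ℕ) : ℝ) + x o / ((2 : ℕ) : ℝ) -
      ∑ i ∈ ({z, o} : Finset (Fin n))ᶜ, x i / ((2 : ℕ) : ℝ) ^ n - (x o - x z) / 2 =
      -∑ i ∈ ({z, o} : Finset (Fin n))ᶜ, x i / ((2 : ℝ) ^ n) by push_cast; ring, abs_neg]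
  exact hsum

/-- The inequalities at `0` and `1` give `|2 y₀ + y₁| ≤ 2` and `|y₀ + 2 y₁| ≤ 2`, which leave
`±(2, -2)` as the only solutions with `|y₁| = 2`; the inequality for `{0, 1}` excludes them. -/
lemma abs_le_one_at_one {y : Fin n → ℤ} (hy : inLB fun i => (y i : ℝ)) {o : Fin n}
    (ho : o.val = 1) (htail : ∀ i, o < i → |y i| ≤ 1) : |y o| ≤ 1 := by
  set x : Fin n → ℝ := fun i => (y i : ℝ)
  obtain ⟨z, hz⟩ : ∃ z : Fin n, z.val = 0 := ⟨⟨0, by omega⟩, rfl⟩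
  have hxtail : ∀ i, o < i → |x i| ≤ 1 := fun i hi => by simp only [x]; exact_mod_cast htail i hi
  have hid0 := lhsJ_sub_half_lhsJ_zero hz z x
  have hid1 := lhsJ_sub_half_lhsJ_zero hz o x
  have hIoi : Ioi z = insert o (Ioi o) := by
    ext i; simp only [mem_Ioi, mem_insert, Fin.lt_def, Fin.ext_iff]; omega
  rw [hIoi, sum_insert (by simp)] at hid0
  have hB := abs_sum_Ioi_lt hxtail
  set B := ∑ i ∈ Ioi o, x i * ((2 : ℝ) ^ (i.val + 1))⁻¹
  simp only [hz, ho] at hid0 hid1 hB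
  norm_num at hid0 hid1 hB
  have hpair := abs_lhsN_pair_sub_lt hz ho (insert_nonempty z {o}) hxtail
  have hzo : z ≠ o := fun e => by rw [e] at hz; omega
  have hN := hy.2 {z, o} (card_pair hzo).ge
  have hd0 := abs_le.mp (hy.1 z)
  have hd1 := abs_le.mp (hy.1 o)
  have h1 : |2 * y z + y o| < 3 := by
    have : |2 * x z + x o| < 3 := by rw [abs_lt] at hB ⊢; constructor <;> linarith
    simp only [x] at this; exact_mod_cast this
  have h2 : |y z + 2 * y o| < 3 := by
    have : |x z + 2 * x o| < 3 := by rw [abs_lt] at hB ⊢; constructor <;> linarith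
    simp only [x] at this; exact_mod_cast this
  have h3 : |y o - y z| < 4 := by
    have : |x o - x z| < 4 := by
      rw [abs_lt] at hpair ⊢; rw [abs_le] at hN; constructor <;> linarith
    simp only [x] at this; exact_mod_cast this
  rw [abs_lt] at h1 h2 h3; rw [abs_le]; omega

lemma abs_le_one_of_inLB {y : Fin n → ℤ} (hy : inLB fun i => (y i : ℝ)) (j : Fin n) :
    |y j| ≤ 1 := by
  induction j using WellFoundedGT.induction with
  | _ j ih =>
    by_cases hj : j.val = 1
    · exact abs_le_one_at_one hy hj ih
    · have := abs_lt_two_of_tail hy hj fun i hi => by exact_mod_cast ih i hi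
      have : |y j| < 2 := by exact_mod_cast this
      omega

lemma lhsJ_eq_of_lt {x : Fin n → ℝ} {ℓ j : Fin n} (hx : ∀ i < ℓ, x i = 0) (hℓj : ℓ < j) :
    lhsJ j x = x ℓ * ((2 : ℝ) ^ (ℓ.val + 1))⁻¹ + x j +
      ∑ i ∈ (Ioi ℓ).erase j, x i * weightJ j i := by
  rw [lhsJ_eq_sum, ← sum_subset (subset_univ (Ici ℓ)) fun i _ hi => by
      rw [hx i (by simpa using hi), zero_mul],
    ← Ioi_insert, sum_insert (by simp), ← add_sum_erase _ _ (mem_Ioi.mpr hℓj),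
    weightJ_of_lt hℓj, weightJ_self, mul_one, add_assoc]

/-- A second entry `-1`, at `i`, would give `lhsJ i y < -1`, since the entries other than the
first nonzero one and `y i` contribute less than the first one (`lhsJ_eq_of_lt`). -/
lemma eq_signedIndicator_of_inLB {y : Fin n → ℤ} (hy : inLB fun i => (y i : ℝ))
    {N : Finset (Fin n)} (hN : ∀ i, i ∈ N ↔ y i ≠ 0) (h : N.Nonempty) (hℓ : y (N.min' h) = -1) :
    y = signedIndicator N h := by
  set ℓ := N.min' h
  have hbound := abs_le_one_of_inLB hy
  have hzero : ∀ i < ℓ, (y i : ℝ) = 0 := fun i hi => by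
    by_contra hne
    exact (N.min'_le i ((hN i).mpr (by exact_mod_cast hne))).not_gt hi
  ext i
  by_cases hiℓ : i = ℓ
  · simp [signedIndicator, hiℓ, hℓ, ℓ]
  by_cases hiN : i ∈ N
  · have hℓi : ℓ < i := lt_of_le_of_ne (N.min'_le i hiN) (Ne.symm hiℓ)
    have hE := abs_sum_mul_weightJ_lt (j := i) (a := ℓ.val + 1) hℓi
      (S := (Ioi ℓ).erase i) (fun k hk => ⟨mem_Ioi.mp (mem_of_mem_erase hk), ne_of_mem_erase hk⟩)
      (x := fun i => (y i : ℝ)) fun k _ => by exact_mod_cast hbound k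
    have hJ := abs_le.mp (hy.1 i)
    rw [lhsJ_eq_of_lt hzero hℓi] at hJ
    have hyi : y i ≠ -1 := fun hyi => by
      simp only [hℓ, hyi, Int.cast_neg, Int.cast_one] at hJ
      linarith [(abs_lt.mp hE).2]
    have := (hN i).mp hiN
    have := abs_le.mp (hbound i)
    rw [show signedIndicator N h i = 1 from if_neg hiℓ |>.trans (if_pos hiN)]
    omega
  · rw [signedIndicator_eq_zero h hiN]
    by_contra hne; exact hiN ((hN i).mpr hne)

lemma eq_zero_or_eq_sign_mul_signedIndicator {y : Fin n → ℤ} (hy : inLB fun i => (y i : ℝ)) :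
    y = 0 ∨ ∃ (N : Finset (Fin n)) (h : N.Nonempty) (b : Bool),
      y = fun i => (if b then 1 else -1) * signedIndicator N h i := by
  set N := univ.filter (y · ≠ 0)
  have hN : ∀ i, i ∈ N ↔ y i ≠ 0 := by simp [N]
  by_cases h : N.Nonempty
  swap
  · left; ext i; by_contra hi; exact h ⟨i, (hN i).mpr hi⟩
  right
  have hℓ := abs_le.mp (abs_le_one_of_inLB hy (N.min' h))
  have hne : y (N.min' h) ≠ 0 := (hN _).mp (min'_mem N h)
  rcases lt_or_gt_of_ne hne with hneg | hpos
  · exact ⟨N, h, true, by simpa using eq_signedIndicator_of_inLB hy hN h (by omega)⟩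
  · have hy' : inLB fun i => ((-y i : ℤ) : ℝ) := by simpa using inLB_neg hy
    have := eq_signedIndicator_of_inLB (y := -y) hy' (fun i => by simpa using hN i) h
      (by simp only [Pi.neg_apply]; omega)
    refine ⟨N, h, false, funext fun i => ?_⟩
    simp [← this]

lemma exists_tightPoint_eq (N : Finset (Fin n)) (h : N.Nonempty) (b : Bool) :
    ∃ idx : LBIdx n, tightPoint idx = fun i => (if b then 1 else -1) * signedIndicator N h i := by
  by_cases hN : 2 ≤ N.card
  · exact ⟨(Sum.inr ⟨N, hN⟩, b), rfl⟩
  · obtain ⟨j, rfl⟩ := card_eq_one.mp (show N.card = 1 by have := card_pos.mpr h; omega)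
    refine ⟨(Sum.inl j, !b), funext fun i => ?_⟩
    rw [signedIndicator_singleton]
    cases b <;> simp [tightPoint, basePoint]

lemma eq_zero_or_eq_tightPoint_of_inLB {y : Fin n → ℤ} (hy : inLB fun i => (y i : ℝ)) :
    y = 0 ∨ ∃ idx : LBIdx n, y = tightPoint idx := by
  rcases eq_zero_or_eq_sign_mul_signedIndicator hy with rfl | ⟨N, h, b, rfl⟩
  · exact Or.inl rfl
  · obtain ⟨idx, hidx⟩ := exists_tightPoint_eq N h b
    exact Or.inr ⟨idx, hidx.symm⟩

lemma eq_tightPoint_of_lbIneq_eq_one {y : Fin n → ℤ}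
    (hy : ∀ idx, lbIneq idx (fun i => (y i : ℝ)) ≤ 1) {idx : LBIdx n}
    (ht : lbIneq idx (fun i => (y i : ℝ)) = 1) : y = tightPoint idx := by
  rcases eq_zero_or_eq_tightPoint_of_inLB ((inLB_iff_forall_lbIneq_le_one _).mpr hy) with
    rfl | ⟨idx', rfl⟩
  · simp [lbIneq_zero] at ht
  · rw [(lbIneq_tightPoint idx' idx).2.mp ht]

lemma card_subtype_two_le_card :
    Fintype.card {N : Finset (Fin n) // 2 ≤ N.card} = 2 ^ n - (n + 1) := by
  have hsmall : univ.filter (fun N : Finset (Fin n) => ¬ 2 ≤ N.card) =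
      powersetCard 0 univ ∪ powersetCard 1 univ := by
    ext N; simp only [mem_filter, mem_univ, true_and, mem_union, mem_powersetCard,
      subset_univ]; omega
  have hdisj : Disjoint (powersetCard 0 (univ : Finset (Fin n))) (powersetCard 1 univ) :=
    disjoint_left.mpr fun N h0 h1 => by
      rw [mem_powersetCard] at h0 h1; omega
  have := card_filter_add_card_filter_not (s := (univ : Finset (Finset (Fin n))))
    (fun N => 2 ≤ N.card)
  rw [hsmall, card_union_of_disjoint hdisj, card_powersetCard, card_powersetCard, card_univ,
    card_univ, Fintype.card_finset, Fintype.card_fin, Nat.choose_zero_right,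
    Nat.choose_one_right] at this
  rw [Fintype.card_subtype]
  omega

lemma card_LBIdx : Fintype.card (LBIdx n) = 2 * (2 ^ n - 1) := by
  rw [Fintype.card_prod, Fintype.card_sum, Fintype.card_bool, card_subtype_two_le_card,
    Fintype.card_fin]
  have := n.lt_two_pow_self
  omega

end

theorem stmt_11_general {n : ℕ} :
    Fintype.card (LBIdx n) = 2 * (2 ^ n - 1) ∧
    (∀ idx : LBIdx n,
      ∃! y : Fin n → ℤ,
        (∀ idx' : LBIdx n, lbIneq idx' (fun i => (y i : ℝ)) ≤ 1) ∧
          lbIneq idx (fun i => (y i : ℝ)) = 1) ∧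
    ∀ idx₁ idx₂ : LBIdx n, ∀ y : Fin n → ℤ,
      (∀ idx' : LBIdx n, lbIneq idx' (fun i => (y i : ℝ)) ≤ 1) →
      lbIneq idx₁ (fun i => (y i : ℝ)) = 1 →
      lbIneq idx₂ (fun i => (y i : ℝ)) = 1 → idx₁ = idx₂ := by
  refine ⟨card_LBIdx, fun idx => ⟨tightPoint idx, ⟨fun idx' => (lbIneq_tightPoint idx idx').1,
    (lbIneq_tightPoint idx idx).2.mpr rfl⟩, fun y ⟨hy, ht⟩ => eq_tightPoint_of_lbIneq_eq_one hy ht⟩,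
    fun idx₁ idx₂ y hy h₁ h₂ => ?_⟩
  rw [eq_tightPoint_of_lbIneq_eq_one hy h₂] at h₁
  exact (lbIneq_tightPoint idx₂ idx₁).2.mp h₁

theorem stmt_11 {n : ℕ} (hn : 1 ≤ n) :
    Fintype.card (LBIdx n) = 2 * (2 ^ n - 1) ∧
    (∀ idx : LBIdx n,
      ∃! y : Fin n → ℤ,
        (∀ idx' : LBIdx n, lbIneq idx' (fun i => (y i : ℝ)) ≤ 1) ∧
          lbIneq idx (fun i => (y i : ℝ)) = 1) ∧
    ∀ idx₁ idx₂ : LBIdx n, ∀ y : Fin n → ℤ,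
      (∀ idx' : LBIdx n, lbIneq idx' (fun i => (y i : ℝ)) ≤ 1) →
      lbIneq idx₁ (fun i => (y i : ℝ)) = 1 →
      lbIneq idx₂ (fun i => (y i : ℝ)) = 1 → idx₁ = idx₂ :=
  stmt_11_general
end
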